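/- Let W(r) = √(8/3)·sin²(π log r) for 1/e ≤ r ≤ 1 and W(r) = 0 otherwise, so that its derivative is W'(r) = √(8/3)·π·sin(2π log r)/r for 1/e ≤ r ≤ 1 and W'(r) = 0 otherwise. Let h : (0,∞) → [0,∞] be measurable, let λ > 0, let 0 < η ≤ 1, and let n ≥ 4 be a real number. Then ∫₀^η ( ∫₀^∞ h(r) · W'(λ·a·r)² · λ²·a² · r^{n−1} dr ) da ≤ (8/3)·π²·(1 − 1/e) · (1/λ) · ∫_{1/(λ η e)}^∞ h(r) · r^{n−4} dr. -/

import Mathlib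

/-! Since `(s W'(s))² ≤ (8/3)π²` and `W'` vanishes off `[1/e, 1]`, the inner integrand is at most
`(8/3)π² h(r) r^{n-3}` on the window `λ a r ∈ [1/e, 1]` and zero elsewhere. After swapping the
integrals by Tonelli, the window meets `a ∈ (0, η]` only when `r ≥ 1/(λ η e)`, and then in a set of
length at most `(1 - 1/e)/(λ r)`. -/

open Real MeasureTheory Set
open scoped ENNReal Classical

noncomputable section

/-- The radial window `W(r) = √(8/3) sin²(π log r)` on `[1/e, 1]`, `0` elsewhere. -/
def W0 : ℝ → ℝ := fun r =>
  if (Real.exp 1)⁻¹ ≤ r ∧ r ≤ 1 then Real.sqrt (8 / 3) * (Real.sin (Real.pi * Real.log r)) ^ 2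
  else 0

/-- The derivative of `W0`: `W'(r) = √(8/3) π sin(2π log r)/r` on `[1/e, 1]`, `0` elsewhere. -/
def W0' : ℝ → ℝ := fun r =>
  if (Real.exp 1)⁻¹ ≤ r ∧ r ≤ 1 then Real.sqrt (8 / 3) * Real.pi * Real.sin (2 * Real.pi * Real.log r) / r
  else 0

theorem W0'_eq_zero_of_notMem {s : ℝ} (hs : s ∉ Icc (exp 1)⁻¹ 1) : W0' s = 0 :=
  if_neg hs

theorem W0'_of_mem {s : ℝ} (hs : s ∈ Icc (exp 1)⁻¹ 1) :
    W0' s = √(8 / 3) * π * sin (2 * π * log s) / s :=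
  if_pos hs

theorem sq_W0'_mul_sq_le (s : ℝ) : W0' s ^ 2 * s ^ 2 ≤ 8 / 3 * π ^ 2 := by
  by_cases hs : s ∈ Icc (exp 1)⁻¹ 1
  · have hs0 : s ≠ 0 := ((inv_pos.2 (exp_pos 1)).trans_le hs.1).ne'
    have hsq : W0' s ^ 2 * s ^ 2 = 8 / 3 * π ^ 2 * sin (2 * π * log s) ^ 2 := by
      rw [W0'_of_mem hs]
      field_simp
      rw [sq_sqrt (by norm_num)]
      ring
    rw [hsq]
    exact mul_le_of_le_one_right (by positivity) (sin_sq_le_one _)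
  · rw [W0'_eq_zero_of_notMem hs, zero_pow two_ne_zero, zero_mul]
    positivity

theorem setLIntegral_Ioc_indicator_comp_mul_le {c : ℝ} (hc : 0 < c) (η α β : ℝ) (y : ℝ≥0∞) :
    ∫⁻ a in Ioc 0 η, (Icc α β).indicator (fun _ => y) (c * a) ≤
      y * ENNReal.ofReal ((β - α) / c) := by
  have hpre : MeasurableSet ((c * ·) ⁻¹' Icc α β) := measurableSet_Icc.preimage (by fun_prop)
  calc ∫⁻ a in Ioc 0 η, (Icc α β).indicator (fun _ => y) (c * a)
      = y * volume.restrict (Ioc 0 η) ((c * ·) ⁻¹' Icc α β) :=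
        lintegral_indicator_const hpre y
    _ ≤ y * volume ((c * ·) ⁻¹' Icc α β) := mul_le_mul' le_rfl (Measure.restrict_apply_le _ _)
    _ = y * ENNReal.ofReal ((β - α) / c) := by
        rw [volume_preimage_mul_left hc.ne', Real.volume_Icc, ← ENNReal.ofReal_mul (by positivity),
          abs_of_pos (inv_pos.2 hc), inv_mul_eq_div]

theorem setLIntegral_Ioc_indicator_comp_mul_eq_zero {c η α : ℝ} (hc : 0 ≤ c) (hcη : c * η < α)
    (β : ℝ) (y : ℝ≥0∞) : ∫⁻ a in Ioc 0 η, (Icc α β).indicator (fun _ => y) (c * a) = 0 := by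
  refine (setLIntegral_congr_fun measurableSet_Ioc fun a ha => ?_).trans lintegral_zero
  exact indicator_of_notMem
    (fun hmem => (hmem.1.trans (mul_le_mul_of_nonneg_left ha.2 hc)).not_gt hcη) _

def windowMajorant (h : ℝ → ℝ≥0∞) (L n a r : ℝ) : ℝ≥0∞ :=
  (Icc (exp 1)⁻¹ 1).indicator (fun _ => h r * ENNReal.ofReal (8 / 3 * π ^ 2 * r ^ (n - 3)))
    (L * r * a)

theorem measurable_uncurry_windowMajorant {h : ℝ → ℝ≥0∞} (hmeas : Measurable h) (L n : ℝ) :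
    Measurable (Function.uncurry (windowMajorant h L n)) := by
  have heq : Function.uncurry (windowMajorant h L n) =
      ((fun p : ℝ × ℝ => L * p.2 * p.1) ⁻¹' Icc (exp 1)⁻¹ 1).indicator
        (fun p => h p.2 * ENNReal.ofReal (8 / 3 * π ^ 2 * p.2 ^ (n - 3))) := by
    ext p
    simp only [Function.uncurry, windowMajorant, indicator_apply, mem_preimage]
  rw [heq]
  exact ((hmeas.comp measurable_snd).mul (by fun_prop)).indicator
    (measurableSet_Icc.preimage (by fun_prop))

theorem integrand_le_windowMajorant (h : ℝ → ℝ≥0∞) (L n a : ℝ) {r : ℝ} (hr : 0 < r) :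
    h r * ENNReal.ofReal (W0' (L * a * r) ^ 2 * L ^ 2 * a ^ 2 * r ^ (n - 1)) ≤
      windowMajorant h L n a r := by
  unfold windowMajorant
  by_cases hs : L * r * a ∈ Icc (exp 1)⁻¹ 1
  · rw [indicator_of_mem hs]
    refine mul_le_mul' le_rfl (ENNReal.ofReal_le_ofReal ?_)
    calc W0' (L * a * r) ^ 2 * L ^ 2 * a ^ 2 * r ^ (n - 1)
        = W0' (L * a * r) ^ 2 * (L * a * r) ^ 2 * r ^ (n - 3) := by
          rw [show n - 1 = n - 3 + 2 by ring, rpow_add hr, rpow_two]; ring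
      _ ≤ 8 / 3 * π ^ 2 * r ^ (n - 3) :=
          mul_le_mul_of_nonneg_right (sq_W0'_mul_sq_le _) (rpow_nonneg hr.le _)
  · rw [indicator_of_notMem hs, W0'_eq_zero_of_notMem (by rwa [mul_right_comm])]
    simp

theorem setLIntegral_windowMajorant_le (h : ℝ → ℝ≥0∞) {L η : ℝ} (hL : 0 < L) (hη : 0 < η)
    (n : ℝ) {r : ℝ} (hr : 0 < r) :
    ∫⁻ a in Ioc 0 η, windowMajorant h L n a r ≤
      (Ici (1 / (L * η * exp 1))).indicator (fun r =>
        ENNReal.ofReal (8 / 3 * π ^ 2 * (1 - 1 / exp 1) * (1 / L)) *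
          (h r * ENNReal.ofReal (r ^ (n - 4)))) r := by
  unfold windowMajorant
  by_cases hT : 1 / (L * η * exp 1) ≤ r
  · rw [indicator_of_mem (mem_Ici.2 hT)]
    refine (setLIntegral_Ioc_indicator_comp_mul_le (by positivity) η _ _ _).trans_eq ?_
    have hr4 : r ^ (n - 3) = r ^ (n - 4) * r := by
      rw [show n - 3 = n - 4 + 1 by ring, rpow_add hr, rpow_one]
    have he : 1 / exp 1 ≤ 1 := (div_le_one (exp_pos 1)).2 (one_le_exp zero_le_one)
    rw [mul_assoc, ← ENNReal.ofReal_mul (by positivity), mul_left_comm,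
      ← ENNReal.ofReal_mul (by bound), hr4]
    congr 2
    field_simp
  · rw [indicator_of_notMem (by simpa using hT)]
    refine (setLIntegral_Ioc_indicator_comp_mul_eq_zero (by positivity) ?_ _ _).le
    rw [not_le, lt_div_iff₀ (by positivity)] at hT
    rw [← one_div, lt_div_iff₀ (exp_pos 1)]
    linarith

theorem radial_window_deriv_integral_le_general (h : ℝ → ℝ≥0∞) (hmeas : Measurable h)
    (L : ℝ) (hL : 0 < L) (η : ℝ) (hη0 : 0 < η)
    (n : ℝ) :
    (∫⁻ a in Set.Ioc (0 : ℝ) η,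
        ∫⁻ r in Set.Ioi (0 : ℝ),
          h r * ENNReal.ofReal ((W0' (L * a * r)) ^ 2 * L ^ 2 * a ^ 2 * r ^ (n - 1))) ≤
      ENNReal.ofReal ((8 / 3) * Real.pi ^ 2 * (1 - 1 / Real.exp 1) * (1 / L)) *
        ∫⁻ r in Set.Ici (1 / (L * η * Real.exp 1)), h r * ENNReal.ofReal (r ^ (n - 4)) := by
  calc _ ≤ ∫⁻ a in Ioc 0 η, ∫⁻ r in Ioi 0, windowMajorant h L n a r :=
        setLIntegral_mono' measurableSet_Ioc fun a _ =>
          setLIntegral_mono' measurableSet_Ioi fun _ hr => integrand_le_windowMajorant h L n a hr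
    _ = ∫⁻ r in Ioi 0, ∫⁻ a in Ioc 0 η, windowMajorant h L n a r :=
        lintegral_lintegral_swap (measurable_uncurry_windowMajorant hmeas L n).aemeasurable
    _ ≤ ∫⁻ r in Ioi 0, (Ici (1 / (L * η * exp 1))).indicator (fun r =>
          ENNReal.ofReal (8 / 3 * π ^ 2 * (1 - 1 / exp 1) * (1 / L)) *
            (h r * ENNReal.ofReal (r ^ (n - 4)))) r :=
        setLIntegral_mono' measurableSet_Ioi fun _ hr =>
          setLIntegral_windowMajorant_le h hL hη0 n hr
    _ ≤ _ := setLIntegral_le_lintegral _ _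
    _ = _ := by
        rw [lintegral_indicator measurableSet_Ici, lintegral_const_mul' _ _ ENNReal.ofReal_ne_top]

/-- **Radial window derivative integral bound:**  for measurable `h : (0,∞) → [0,∞]`,
`λ > 0`, `0 < η ≤ 1` and real `n ≥ 4`,
`∫₀^η ∫₀^∞ h(r) W'(λ a r)² λ² a² r^{n−1} dr da
  ≤ (8/3)π²(1 − 1/e)(1/λ) ∫_{1/(ληe)}^∞ h(r) r^{n−4} dr`. -/
theorem radial_window_deriv_integral_le (h : ℝ → ℝ≥0∞) (hmeas : Measurable h)
    (L : ℝ) (hL : 0 < L) (η : ℝ) (hη0 : 0 < η) (hη1 : η ≤ 1)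
    (n : ℝ) (hn : 4 ≤ n) :
    (∫⁻ a in Set.Ioc (0 : ℝ) η,
        ∫⁻ r in Set.Ioi (0 : ℝ),
          h r * ENNReal.ofReal ((W0' (L * a * r)) ^ 2 * L ^ 2 * a ^ 2 * r ^ (n - 1))) ≤
      ENNReal.ofReal ((8 / 3) * Real.pi ^ 2 * (1 - 1 / Real.exp 1) * (1 / L)) *
        ∫⁻ r in Set.Ici (1 / (L * η * Real.exp 1)), h r * ENNReal.ofReal (r ^ (n - 4)) :=
  radial_window_deriv_integral_le_general h hmeas L hL η hη0 n
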